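/- (Bezdek–Bezdek) Let C be a convex body in ℝ^d and n ≥ 1. Suppose C_1, …, C_n is a division of C obtained by n−1 successive hyperplane cuts: the division is defined recursively, where the trivial division of C is {C}, and a division with k+1 pieces is obtained from a division with k pieces by replacing one piece D by the two pieces D ∩ H⁺ and D ∩ H⁻ for some hyperplane H with bounding closed halfspaces H⁺, H⁻, both new pieces having nonempty interior. Let ρ > 0 be the unique number satisfying width(C^ρ) = 2nρ. Then max_{1 ≤ i ≤ n} I(C_i) ≥ ρ. -/

import Mathlib

open Metric Set
open scoped Classical
open scoped RealInnerProductSpace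

/-- The directional width of a set `K` in direction `v`. -/
noncomputable def dirWidth {d : ℕ} (v : EuclideanSpace ℝ (Fin d))
    (K : Set (EuclideanSpace ℝ (Fin d))) : ℝ :=
  sSup ((fun x => ⟪v, x⟫) '' K) - sInf ((fun x => ⟪v, x⟫) '' K)

/-- The width of `K`: the minimum directional width over all unit directions. -/
noncomputable def setWidth {d : ℕ} (K : Set (EuclideanSpace ℝ (Fin d))) : ℝ :=
  sInf {w | ∃ v : EuclideanSpace ℝ (Fin d), ‖v‖ = 1 ∧ w = dirWidth v K}

/-- The `ρ`-rounded body `C^ρ`: the union of all closed `ρ`-balls contained in `C`. -/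
def rounded {d : ℕ} (C : Set (EuclideanSpace ℝ (Fin d))) (ρ : ℝ) :
    Set (EuclideanSpace ℝ (Fin d)) :=
  {y | ∃ x, closedBall x ρ ⊆ C ∧ y ∈ closedBall x ρ}

/-- The inradius of `K`. -/
noncomputable def inradius {d : ℕ} (K : Set (EuclideanSpace ℝ (Fin d))) : ℝ :=
  sSup {r : ℝ | ∃ x, closedBall x r ⊆ K}

/-- `SuccessiveCuts C L` means the list of pieces `L` is obtained from the convex body `C`
by successive hyperplane cuts: the trivial division is `[C]`, and a division with one more
piece is obtained by replacing one piece `D` by its two intersections with the closed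
halfspaces bounded by a hyperplane `{x : v·x = c}`, both new pieces having
nonempty interior. -/
inductive SuccessiveCuts {d : ℕ} :
    Set (EuclideanSpace ℝ (Fin d)) → List (Set (EuclideanSpace ℝ (Fin d))) → Prop
  | trivial (C : Set (EuclideanSpace ℝ (Fin d))) : SuccessiveCuts C [C]
  | cut (C : Set (EuclideanSpace ℝ (Fin d))) (L : List (Set (EuclideanSpace ℝ (Fin d))))
      (D : Set (EuclideanSpace ℝ (Fin d))) (v : EuclideanSpace ℝ (Fin d)) (c : ℝ)
      (hL : SuccessiveCuts C L) (hD : D ∈ L) (hv : v ≠ 0)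
      (h₁ : (interior (D ∩ {x | ⟪v, x⟫ ≤ c})).Nonempty)
      (h₂ : (interior (D ∩ {x | c ≤ ⟪v, x⟫})).Nonempty) :
      SuccessiveCuts C
        ((L.erase D) ++ [D ∩ {x | ⟪v, x⟫ ≤ c}, D ∩ {x | c ≤ ⟪v, x⟫}])

/-!
Let `D_ρ = innerBody D ρ` be the set of centres of the `ρ`-balls in `D`, and put
`g(D) = width(D_ρ) + 2ρ` if `D_ρ ≠ ∅`, `g(D) = 2 · inradius D` otherwise (`roundedWidth`).
Then `width(C^ρ) ≤ g(C)`, while a piece of inradius `< ρ` has `g < 2ρ`; so it suffices that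
`g` is superadditive under a cut of a convex body `D` by a hyperplane `⟪u, x⟫ = c`.

The inner bodies of the two halves are the parts of `D_ρ` with `⟪u, x⟫ ≤ c - ρ` and
`⟪u, x⟫ ≥ c + ρ`. A nonempty part contains the image of `D_ρ` under a homothety centred at the
extreme point of `D_ρ` on its side, so it keeps a proportional share of the width of `D_ρ`;
together the two parts lose at most `2ρ`. For an empty part, the `ρ`-ball around the point of
`D_ρ` nearest to that half still reaches into the half, and the largest ball in this overlap
bounds the inradius of the half from below. The case `D_ρ = ∅` is similar: the inradius of `D`
is at most the sum of the inradii of the halves.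
-/

open Bornology

section

variable {F : Type*}

def innerBody [PseudoMetricSpace F] (D : Set F) (ρ : ℝ) : Set F :=
  {x | closedBall x ρ ⊆ D}

theorem innerBody_subset [PseudoMetricSpace F] {D : Set F} {ρ : ℝ} (hρ : 0 ≤ ρ) :
    innerBody D ρ ⊆ D :=
  fun _ hx => hx (mem_closedBall_self hρ)

theorem innerBody_inter [PseudoMetricSpace F] (D D' : Set F) (ρ : ℝ) :
    innerBody (D ∩ D') ρ = innerBody D ρ ∩ innerBody D' ρ := by
  ext x
  exact subset_inter_iff

theorem innerBody_eq_biInter [SeminormedAddCommGroup F] (D : Set F) (ρ : ℝ) :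
    innerBody D ρ = ⋂ w ∈ closedBall (0 : F) ρ, (· + w) ⁻¹' D := by
  ext x
  simp only [innerBody, mem_ofPred_eq, mem_iInter, mem_preimage]
  constructor
  · intro h w hw
    exact h (by simpa [dist_eq_norm] using hw)
  · intro h y hy
    simpa using h (y - x) (by simpa [dist_eq_norm] using hy)

theorem isClosed_innerBody [SeminormedAddCommGroup F] {D : Set F} (hD : IsClosed D) (ρ : ℝ) :
    IsClosed (innerBody D ρ) := by
  rw [innerBody_eq_biInter]
  exact isClosed_biInter fun w _ => hD.preimage (continuous_add_const w)

theorem isCompact_innerBody [NormedAddCommGroup F] {D : Set F} (hD : IsCompact D) {ρ : ℝ}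
    (hρ : 0 ≤ ρ) : IsCompact (innerBody D ρ) :=
  hD.of_isClosed_subset (isClosed_innerBody hD.isClosed ρ) (innerBody_subset hρ)

theorem convex_innerBody [SeminormedAddCommGroup F] [NormedSpace ℝ F] {D : Set F}
    (hD : Convex ℝ D) (ρ : ℝ) : Convex ℝ (innerBody D ρ) := by
  rw [innerBody_eq_biInter]
  exact convex_iInter₂ fun w _ => hD.translate_preimage_left w

variable [NormedAddCommGroup F] [InnerProductSpace ℝ F]

theorem innerBody_halfspace {u : F} (hu : ‖u‖ = 1) (c : ℝ) {ρ : ℝ} (hρ : 0 ≤ ρ) :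
    innerBody {x | ⟪u, x⟫ ≤ c} ρ = {x | ⟪u, x⟫ ≤ c - ρ} := by
  ext x
  constructor
  · intro h
    have hmem : x + ρ • u ∈ closedBall x ρ := by
      simp [dist_eq_norm, norm_smul, hu, abs_of_nonneg hρ]
    have := h hmem
    simp only [mem_ofPred_eq, inner_add_right, real_inner_smul_right,
      real_inner_self_eq_norm_sq, hu] at this ⊢
    linarith
  · intro hx y hy
    have hcs := real_inner_le_norm u (y - x)
    rw [hu, one_mul, inner_sub_right] at hcs
    have hyx : ‖y - x‖ ≤ ρ := by simpa [dist_eq_norm] using hy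
    simp only [mem_ofPred_eq] at hx ⊢
    linarith

theorem setOf_le_inner_eq_setOf_inner_neg_le (u : F) (c : ℝ) :
    {x : F | c ≤ ⟪u, x⟫} = {x | ⟪-u, x⟫ ≤ -c} := by
  simp only [inner_neg_left, neg_le_neg_iff]

theorem innerBody_inter_halfspace_le {D : Set F} {u : F} (hu : ‖u‖ = 1) (c : ℝ) {ρ : ℝ}
    (hρ : 0 ≤ ρ) :
    innerBody (D ∩ {x | ⟪u, x⟫ ≤ c}) ρ = innerBody D ρ ∩ {x | ⟪u, x⟫ ≤ c - ρ} := by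
  rw [innerBody_inter, innerBody_halfspace hu c hρ]

theorem innerBody_inter_halfspace_ge {D : Set F} {u : F} (hu : ‖u‖ = 1) (c : ℝ) {ρ : ℝ}
    (hρ : 0 ≤ ρ) :
    innerBody (D ∩ {x | c ≤ ⟪u, x⟫}) ρ = innerBody D ρ ∩ {x | c + ρ ≤ ⟪u, x⟫} := by
  rw [setOf_le_inner_eq_setOf_inner_neg_le, innerBody_inter_halfspace_le (by rwa [norm_neg]) _ hρ,
    ← neg_add', ← setOf_le_inner_eq_setOf_inner_neg_le]

theorem closedBall_subset_inter_halfspace {D : Set F} {u : F} (hu : ‖u‖ = 1) {x : F}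
    {r r' c : ℝ} (hx : closedBall x r ⊆ D) (h₀ : 0 ≤ r') (h₁ : r' ≤ r)
    (hc : ⟪u, x⟫ + 2 * r' - r ≤ c) :
    closedBall (x - (r - r') • u) r' ⊆ D ∩ {y | ⟪u, y⟫ ≤ c} := by
  have hdist : dist (x - (r - r') • u) x = r - r' := by
    simp [norm_smul, hu, abs_of_nonneg (sub_nonneg.2 h₁)]
  have hcentre : x - (r - r') • u ∈ innerBody {y | ⟪u, y⟫ ≤ c} r' := by
    rw [innerBody_halfspace hu c h₀]
    simp only [mem_ofPred_eq, inner_sub_right, real_inner_smul_right,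
      real_inner_self_eq_norm_sq, hu]
    linarith
  exact subset_inter ((closedBall_subset_closedBall' (by linarith)).trans hx) hcentre

theorem isBounded_image_inner (v : F) {K : Set F} (hK : IsBounded K) :
    IsBounded ((fun x => ⟪v, x⟫) '' K) :=
  (innerSL ℝ v).lipschitz.isBounded_image hK

theorem IsCompact.exists_isMinOn_isMaxOn_inner {M : Set F} (hM : IsCompact M)
    (hne : M.Nonempty) (u : F) :
    ∃ x₀ ∈ M, ∃ x₁ ∈ M, IsMinOn (fun y => ⟪u, y⟫) M x₀ ∧ IsMaxOn (fun y => ⟪u, y⟫) M x₁ := by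
  have hcont : ContinuousOn (fun y => ⟪u, y⟫) M :=
    (continuous_const.inner continuous_id).continuousOn
  obtain ⟨x₀, hx₀, hmin⟩ := hM.exists_isMinOn hne hcont
  obtain ⟨x₁, hx₁, hmax⟩ := hM.exists_isMaxOn hne hcont
  exact ⟨x₀, hx₀, x₁, hx₁, hmin, hmax⟩

end

section

variable {d : ℕ}

local notation "E" => EuclideanSpace ℝ (Fin d)

theorem dirWidth_eq_diam (v : E) {K : Set E} (hK : IsBounded K) :
    dirWidth v K = diam ((fun x => ⟪v, x⟫) '' K) :=
  (Real.diam_eq (isBounded_image_inner v hK)).symm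

theorem dirWidth_nonneg (v : E) {K : Set E} (hK : IsBounded K) : 0 ≤ dirWidth v K := by
  rw [dirWidth_eq_diam v hK]
  exact diam_nonneg

theorem inner_sub_inner_le_dirWidth (v : E) {K : Set E} (hK : IsBounded K) {x y : E}
    (hx : x ∈ K) (hy : y ∈ K) : ⟪v, x⟫ - ⟪v, y⟫ ≤ dirWidth v K := by
  rw [dirWidth_eq_diam v hK]
  calc ⟪v, x⟫ - ⟪v, y⟫ ≤ dist ⟪v, x⟫ ⟪v, y⟫ := (le_abs_self _).trans (Real.dist_eq _ _).ge
    _ ≤ _ := dist_le_diam_of_mem (isBounded_image_inner v hK) (mem_image_of_mem _ hx)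
      (mem_image_of_mem _ hy)

theorem dirWidth_le_of_forall_inner_sub_le (v : E) {K : Set E} (hK : IsBounded K)
    {b : ℝ} (hb : 0 ≤ b) (h : ∀ x ∈ K, ∀ y ∈ K, ⟪v, x⟫ - ⟪v, y⟫ ≤ b) : dirWidth v K ≤ b := by
  rw [dirWidth_eq_diam v hK]
  refine diam_le_of_forall_dist_le hb ?_
  rintro _ ⟨x, hx, rfl⟩ _ ⟨y, hy, rfl⟩
  rw [Real.dist_eq, abs_sub_le_iff]
  exact ⟨h x hx y hy, h y hy x hx⟩

theorem setWidth_le_dirWidth {K : Set E} (hK : IsBounded K) {v : E} (hv : ‖v‖ = 1) :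
    setWidth K ≤ dirWidth v K :=
  csInf_le ⟨0, by rintro _ ⟨w, -, rfl⟩; exact dirWidth_nonneg w hK⟩ ⟨v, hv, rfl⟩

theorem setWidth_nonneg {K : Set E} (hK : IsBounded K) : 0 ≤ setWidth K :=
  Real.sInf_nonneg (by rintro _ ⟨v, -, rfl⟩; exact dirWidth_nonneg v hK)

theorem le_setWidth [NeZero d] {K : Set E} {b : ℝ} (h : ∀ v : E, ‖v‖ = 1 → b ≤ dirWidth v K) :
    b ≤ setWidth K := by
  obtain ⟨v, hv⟩ := exists_norm_eq E zero_le_one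
  exact le_csInf ⟨_, v, hv, rfl⟩ (by rintro _ ⟨w, hw, rfl⟩; exact h w hw)

theorem setWidth_le_inner_sub_inner {K : Set E} (hK : IsBounded K) {u x₀ x₁ : E}
    (hu : ‖u‖ = 1) (hx₀ : x₀ ∈ K) (hmin : IsMinOn (fun y => ⟪u, y⟫) K x₀)
    (hmax : IsMaxOn (fun y => ⟪u, y⟫) K x₁) : setWidth K ≤ ⟪u, x₁⟫ - ⟪u, x₀⟫ :=
  (setWidth_le_dirWidth hK hu).trans <| dirWidth_le_of_forall_inner_sub_le u hK
    (sub_nonneg.2 (hmax hx₀)) fun _ hx _ hy => sub_le_sub (hmax hx) (hmin hy)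

/-- In dimension `0` there is no unit vector, so `setWidth` is the junk value `sInf ∅ = 0`. -/
theorem neZero_of_setWidth_ne_zero {K : Set E} (h : setWidth K ≠ 0) : NeZero d := by
  refine ⟨fun hd => h ?_⟩
  subst hd
  have : {w | ∃ v : EuclideanSpace ℝ (Fin 0), ‖v‖ = 1 ∧ w = dirWidth v K} = ∅ :=
    eq_empty_iff_forall_notMem.2 fun _ ⟨v, hv, _⟩ => by simp [Subsingleton.elim v 0] at hv
  rw [setWidth, this, Real.sInf_empty]

theorem mul_setWidth_le_of_add_smul_sub_mem [NeZero d] {M N : Set E} (hM : IsBounded M)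
    (hN : IsBounded N) {x : E} {lam : ℝ} (hlam : 0 ≤ lam)
    (h : ∀ y ∈ M, x + lam • (y - x) ∈ N) : lam * setWidth M ≤ setWidth N := by
  refine le_setWidth fun v hv => ?_
  have hdir : lam * dirWidth v M ≤ dirWidth v N := by
    rcases hlam.eq_or_lt with rfl | hpos
    · rw [zero_mul]
      exact dirWidth_nonneg v hN
    rw [← le_div_iff₀' hpos]
    refine dirWidth_le_of_forall_inner_sub_le v hM (div_nonneg (dirWidth_nonneg v hN) hpos.le)
      fun y hy z hz => ?_
    rw [le_div_iff₀' hpos]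
    have := inner_sub_inner_le_dirWidth v hN (h y hy) (h z hz)
    simp only [inner_add_right, real_inner_smul_right, inner_sub_right] at this
    linarith
  exact (mul_le_mul_of_nonneg_left (setWidth_le_dirWidth hM hv) hlam).trans hdir

/-- The homothety with centre `x₁` and ratio `(⟪u, x₁⟫ - t) / (⟪u, x₁⟫ - m)` maps `M` into
`M ∩ {y | t ≤ ⟪u, y⟫}`. -/
theorem mul_setWidth_le_mul_setWidth_inter [NeZero d] {M : Set E} (hM : IsBounded M)
    (hconv : Convex ℝ M) {u x₁ : E} (hx₁ : x₁ ∈ M)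
    {m t : ℝ} (hm : ∀ y ∈ M, m ≤ ⟪u, y⟫) (hmt : m ≤ t) (ht : t ≤ ⟪u, x₁⟫) :
    (⟪u, x₁⟫ - t) * setWidth M ≤ (⟪u, x₁⟫ - m) * setWidth (M ∩ {y | t ≤ ⟪u, y⟫}) := by
  rcases (hmt.trans ht).eq_or_lt with hs | hs
  · simp [show t = ⟪u, x₁⟫ by linarith, ← hs]
  set lam := (⟪u, x₁⟫ - t) / (⟪u, x₁⟫ - m)
  have hs' : 0 < ⟪u, x₁⟫ - m := sub_pos.2 hs
  have hlam : lam * (⟪u, x₁⟫ - m) = ⟪u, x₁⟫ - t := div_mul_cancel₀ _ hs'.ne'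
  have hlam₀ : 0 ≤ lam := div_nonneg (sub_nonneg.2 ht) hs'.le
  have hlam₁ : lam ≤ 1 := (div_le_one hs').2 (by linarith)
  have key := mul_setWidth_le_of_add_smul_sub_mem hM (hM.subset inter_subset_left) hlam₀
    (N := M ∩ {y | t ≤ ⟪u, y⟫}) fun y hy => by
      refine ⟨hconv.add_smul_sub_mem hx₁ hy ⟨hlam₀, hlam₁⟩, ?_⟩
      have hy' : lam * (⟪u, x₁⟫ - ⟪u, y⟫) ≤ lam * (⟪u, x₁⟫ - m) :=
        mul_le_mul_of_nonneg_left (by linarith [hm y hy]) hlam₀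
      simp only [mem_ofPred_eq, inner_add_right, real_inner_smul_right, inner_sub_right]
      linarith
  calc (⟪u, x₁⟫ - t) * setWidth M = (⟪u, x₁⟫ - m) * (lam * setWidth M) := by
        rw [← hlam]; ring
    _ ≤ _ := mul_le_mul_of_nonneg_left key hs'.le

theorem setWidth_sub_le_setWidth_inter_add [NeZero d] {M : Set E} (hM : IsBounded M)
    (hconv : Convex ℝ M) {u x₀ x₁ : E} (hu : ‖u‖ = 1) (hx₀ : x₀ ∈ M) (hx₁ : x₁ ∈ M)
    (hmin : IsMinOn (fun y => ⟪u, y⟫) M x₀) (hmax : IsMaxOn (fun y => ⟪u, y⟫) M x₁)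
    {a b : ℝ} (ha : ⟪u, x₀⟫ ≤ a) (hab : a ≤ b) (hb : b ≤ ⟪u, x₁⟫) :
    setWidth M - (b - a) ≤
      setWidth (M ∩ {y | ⟪u, y⟫ ≤ a}) + setWidth (M ∩ {y | b ≤ ⟪u, y⟫}) := by
  have hB := mul_setWidth_le_mul_setWidth_inter hM hconv hx₁ (fun y hy => hmin hy)
    (ha.trans hab) hb
  have hA := mul_setWidth_le_mul_setWidth_inter hM hconv (u := -u) hx₀ (m := -⟪u, x₁⟫)
    (t := -a) (fun y hy => by simpa [inner_neg_left] using hmax hy)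
    (by linarith [hab.trans hb])
    (by simpa [inner_neg_left] using ha)
  simp only [inner_neg_left, sub_neg_eq_add, neg_le_neg_iff] at hA
  have hw := setWidth_le_inner_sub_inner hM hu hx₀ hmin hmax
  have hAw := setWidth_nonneg (hM.subset (inter_subset_left (t := {y | ⟪u, y⟫ ≤ a})))
  have hBw := setWidth_nonneg (hM.subset (inter_subset_left (t := {y | b ≤ ⟪u, y⟫})))
  have hgap : (b - a) * setWidth M ≤ (b - a) * (⟪u, x₁⟫ - ⟪u, x₀⟫) :=
    mul_le_mul_of_nonneg_left hw (sub_nonneg.2 hab)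
  rcases (ha.trans (hab.trans hb)).eq_or_lt with hs | hs
  · linarith
  refine le_of_mul_le_mul_left ?_ (sub_pos.2 hs)
  linarith

theorem setWidth_le_sub_add_setWidth_inter [NeZero d] {M : Set E} (hM : IsBounded M)
    (hconv : Convex ℝ M) {u x₀ x₁ : E} (hu : ‖u‖ = 1) (hx₀ : x₀ ∈ M) (hx₁ : x₁ ∈ M)
    (hmin : IsMinOn (fun y => ⟪u, y⟫) M x₀) (hmax : IsMaxOn (fun y => ⟪u, y⟫) M x₁)
    {b : ℝ} (hb₀ : ⟪u, x₀⟫ ≤ b) (hb₁ : b ≤ ⟪u, x₁⟫) :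
    setWidth M ≤ (b - ⟪u, x₀⟫) + setWidth (M ∩ {y | b ≤ ⟪u, y⟫}) := by
  have hB := mul_setWidth_le_mul_setWidth_inter hM hconv hx₁ (fun y hy => hmin hy) hb₀ hb₁
  have hw := setWidth_le_inner_sub_inner hM hu hx₀ hmin hmax
  have hBw := setWidth_nonneg (hM.subset (inter_subset_left (t := {y | b ≤ ⟪u, y⟫})))
  have hgap : (b - ⟪u, x₀⟫) * setWidth M ≤ (b - ⟪u, x₀⟫) * (⟪u, x₁⟫ - ⟪u, x₀⟫) :=
    mul_le_mul_of_nonneg_left hw (sub_nonneg.2 hb₀)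
  rcases (hb₀.trans hb₁).eq_or_lt with hs | hs
  · linarith
  refine le_of_mul_le_mul_left ?_ (sub_pos.2 hs)
  linarith

theorem bddAbove_setOf_closedBall_subset [NeZero d] {D : Set E} (hD : IsBounded D) :
    BddAbove {r : ℝ | ∃ x, closedBall x r ⊆ D} := by
  refine ⟨diam D, ?_⟩
  rintro r ⟨x, hx⟩
  rcases le_or_gt r 0 with hr | hr
  · exact hr.trans diam_nonneg
  · have := (diam_closedBall_eq x hr.le).symm.trans_le (diam_mono hx hD)
    linarith

theorem le_inradius [NeZero d] {D : Set E} (hD : IsBounded D) {x : E} {r : ℝ}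
    (h : closedBall x r ⊆ D) : r ≤ inradius D :=
  le_csSup (bddAbove_setOf_closedBall_subset hD) ⟨x, h⟩

theorem mem_setOf_closedBall_subset_of_neg (D : Set E) {r : ℝ} (hr : r < 0) :
    r ∈ {r : ℝ | ∃ x, closedBall x r ⊆ D} :=
  ⟨0, by simp [closedBall_eq_empty.2 hr]⟩

theorem inradius_nonneg (D : Set E) : 0 ≤ inradius D := by
  by_cases hb : BddAbove {r : ℝ | ∃ x, closedBall x r ⊆ D}
  · exact le_of_forall_lt_imp_le_of_dense fun r hr =>
      le_csSup hb (mem_setOf_closedBall_subset_of_neg D hr)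
  · rw [inradius, Real.sSup_of_not_bddAbove hb]

theorem exists_closedBall_subset_of_lt_inradius {D : Set E} {r : ℝ} (h : r < inradius D) :
    ∃ x, closedBall x r ⊆ D := by
  obtain ⟨r', ⟨x, hx⟩, hr'⟩ :=
    exists_lt_of_lt_csSup ⟨-1, mem_setOf_closedBall_subset_of_neg D (by norm_num)⟩ h
  exact ⟨x, (closedBall_subset_closedBall hr'.le).trans hx⟩

theorem sub_inner_le_two_mul_inradius_inter [NeZero d] {D : Set E} (hD : IsBounded D) {u x : E}
    (hu : ‖u‖ = 1) {r c : ℝ} (hx : closedBall x r ⊆ D) (h₁ : c - r ≤ ⟪u, x⟫)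
    (h₂ : ⟪u, x⟫ ≤ c + r) : c + r - ⟪u, x⟫ ≤ 2 * inradius (D ∩ {y | ⟪u, y⟫ ≤ c}) := by
  have := le_inradius (hD.subset inter_subset_left) <|
    closedBall_subset_inter_halfspace hu hx (r' := (c + r - ⟪u, x⟫) / 2) (c := c) (by linarith)
      (by linarith) (by linarith)
  linarith

theorem inner_sub_le_two_mul_inradius_inter [NeZero d] {D : Set E} (hD : IsBounded D) {u x : E}
    (hu : ‖u‖ = 1) {r c : ℝ} (hx : closedBall x r ⊆ D) (h₁ : c - r ≤ ⟪u, x⟫)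
    (h₂ : ⟪u, x⟫ ≤ c + r) : ⟪u, x⟫ - c + r ≤ 2 * inradius (D ∩ {y | c ≤ ⟪u, y⟫}) := by
  have := sub_inner_le_two_mul_inradius_inter hD (u := -u) (c := -c) (by rwa [norm_neg]) hx
    (by rw [inner_neg_left]; linarith) (by rw [inner_neg_left]; linarith)
  rw [← setOf_le_inner_eq_setOf_inner_neg_le, inner_neg_left] at this
  linarith

theorem inradius_le_inradius_inter_add [NeZero d] {D : Set E} (hD : IsBounded D) {u : E}
    (hu : ‖u‖ = 1) (c : ℝ) :
    inradius D ≤ inradius (D ∩ {x | ⟪u, x⟫ ≤ c}) + inradius (D ∩ {x | c ≤ ⟪u, x⟫}) := by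
  have hA := inradius_nonneg (D ∩ {x | ⟪u, x⟫ ≤ c})
  have hB := inradius_nonneg (D ∩ {x | c ≤ ⟪u, x⟫})
  refine le_of_forall_lt_imp_le_of_dense fun r hr => ?_
  obtain ⟨x, hx⟩ := exists_closedBall_subset_of_lt_inradius hr
  rcases le_or_gt r 0 with hr₀ | hr₀
  · linarith
  by_cases h₁ : ⟪u, x⟫ ≤ c - r
  · have hxA : x ∈ innerBody {y | ⟪u, y⟫ ≤ c} r := by rwa [innerBody_halfspace hu c hr₀.le]
    linarith [le_inradius (hD.subset inter_subset_left) (subset_inter hx hxA)]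
  by_cases h₂ : c + r ≤ ⟪u, x⟫
  · have hxB : x ∈ innerBody {y | c ≤ ⟪u, y⟫} r := by
      rw [setOf_le_inner_eq_setOf_inner_neg_le, innerBody_halfspace (by rwa [norm_neg]) _ hr₀.le]
      simp only [mem_ofPred_eq, inner_neg_left]
      linarith
    linarith [le_inradius (hD.subset inter_subset_left) (subset_inter hx hxB)]
  have hA' := sub_inner_le_two_mul_inradius_inter hD hu (c := c) hx (by linarith) (by linarith)
  have hB' := inner_sub_le_two_mul_inradius_inter hD hu (c := c) hx (by linarith) (by linarith)
  linarith

/-- For a convex body `D` this is the width of `D^r` with `r = min ρ (inradius D)`. -/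
noncomputable def roundedWidth (D : Set E) (ρ : ℝ) : ℝ :=
  if (innerBody D ρ).Nonempty then setWidth (innerBody D ρ) + 2 * ρ else 2 * inradius D

theorem roundedWidth_of_nonempty {D : Set E} {ρ : ℝ} (h : (innerBody D ρ).Nonempty) :
    roundedWidth D ρ = setWidth (innerBody D ρ) + 2 * ρ :=
  if_pos h

theorem roundedWidth_of_not_nonempty {D : Set E} {ρ : ℝ} (h : ¬(innerBody D ρ).Nonempty) :
    roundedWidth D ρ = 2 * inradius D :=
  if_neg h

theorem rounded_subset (C : Set E) (ρ : ℝ) : rounded C ρ ⊆ C :=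
  fun _ ⟨_, hx, hy⟩ => hx hy

theorem dirWidth_rounded_le {C : Set E} (hC : IsBounded C) {ρ : ℝ} (hρ : 0 ≤ ρ)
    {v : E} (hv : ‖v‖ = 1) : dirWidth v (rounded C ρ) ≤ dirWidth v (innerBody C ρ) + 2 * ρ := by
  have hM : IsBounded (innerBody C ρ) := hC.subset (innerBody_subset hρ)
  refine dirWidth_le_of_forall_inner_sub_le v (hC.subset (rounded_subset C ρ))
    (by linarith [dirWidth_nonneg v hM]) ?_
  rintro y ⟨x, hx, hy⟩ y' ⟨x', hx', hy'⟩
  have hxx' := inner_sub_inner_le_dirWidth v hM hx hx'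
  have hyx := real_inner_le_norm v (y - x)
  have hx'y' := real_inner_le_norm v (x' - y')
  rw [mem_closedBall, dist_eq_norm] at hy hy'
  rw [norm_sub_rev] at hy'
  rw [hv, one_mul, inner_sub_right] at hyx hx'y'
  linarith

theorem setWidth_rounded_le_roundedWidth [NeZero d] {C : Set E} (hC : IsBounded C) {ρ : ℝ}
    (hρ : 0 ≤ ρ) : setWidth (rounded C ρ) ≤ roundedWidth C ρ := by
  by_cases hM : (innerBody C ρ).Nonempty
  · rw [roundedWidth_of_nonempty hM, ← sub_le_iff_le_add]
    refine le_setWidth fun v hv => ?_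
    have := setWidth_le_dirWidth (hC.subset (rounded_subset C ρ)) hv
    linarith [dirWidth_rounded_le hC hρ hv]
  · have hempty : rounded C ρ = ∅ :=
      eq_empty_iff_forall_notMem.2 fun _ ⟨x, hx, _⟩ => hM ⟨x, hx⟩
    obtain ⟨v, hv⟩ := exists_norm_eq E zero_le_one
    have := setWidth_le_dirWidth isBounded_empty hv (K := ∅)
    rw [roundedWidth_of_not_nonempty hM, hempty]
    simp only [dirWidth, image_empty, Real.sSup_empty, Real.sInf_empty, sub_zero] at this
    linarith [inradius_nonneg C]

theorem roundedWidth_lt_of_inradius_lt [NeZero d] {D : Set E} (hD : IsBounded D) {ρ : ℝ}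
    (h : inradius D < ρ) : roundedWidth D ρ < 2 * ρ := by
  have hM : ¬(innerBody D ρ).Nonempty := fun ⟨x, hx⟩ => (le_inradius hD hx).not_gt h
  rw [roundedWidth_of_not_nonempty hM]
  linarith

theorem roundedWidth_le_add_of_nonempty [NeZero d] {D : Set E} {ρ : ℝ} {u : E} (hρ : 0 ≤ ρ)
    (hD : IsCompact D) (hconv : Convex ℝ D) (hu : ‖u‖ = 1) (c : ℝ)
    (hB : (innerBody (D ∩ {x | c ≤ ⟪u, x⟫}) ρ).Nonempty) :
    roundedWidth D ρ ≤
      roundedWidth (D ∩ {x | ⟪u, x⟫ ≤ c}) ρ + roundedWidth (D ∩ {x | c ≤ ⟪u, x⟫}) ρ := by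
  set M := innerBody D ρ
  have hMA := innerBody_inter_halfspace_le (D := D) hu c hρ
  have hMB := innerBody_inter_halfspace_ge (D := D) hu c hρ
  have hMc : IsCompact M := isCompact_innerBody hD hρ
  have hMconv : Convex ℝ M := convex_innerBody hconv ρ
  obtain ⟨y, hyM, hy⟩ := hMB ▸ hB
  obtain ⟨x₀, hx₀, x₁, hx₁, hmin, hmax⟩ := hMc.exists_isMinOn_isMaxOn_inner ⟨y, hyM⟩ u
  have hx₁c : c + ρ ≤ ⟪u, x₁⟫ := hy.trans (hmax hyM)
  rw [roundedWidth_of_nonempty ⟨y, hyM⟩, roundedWidth_of_nonempty hB, hMB]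
  by_cases hA : (innerBody (D ∩ {x | ⟪u, x⟫ ≤ c}) ρ).Nonempty
  · obtain ⟨z, hzM, hz⟩ := hMA ▸ hA
    rw [roundedWidth_of_nonempty hA, hMA]
    linarith [setWidth_sub_le_setWidth_inter_add hMc.isBounded hMconv hu hx₀ hx₁ hmin hmax
      ((hmin hzM).trans hz) (by linarith) hx₁c]
  rw [roundedWidth_of_not_nonempty hA]
  have hx₀c : c - ρ < ⟪u, x₀⟫ := lt_of_not_ge fun h => hA (hMA ▸ ⟨x₀, hx₀, h⟩)
  rcases le_or_gt (c + ρ) ⟪u, x₀⟫ with h | h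
  · have hall : M ∩ {x | c + ρ ≤ ⟪u, x⟫} = M := inter_eq_left.2 fun y hy => h.trans (hmin hy)
    rw [hall]
    linarith [inradius_nonneg (D ∩ {x | ⟪u, x⟫ ≤ c})]
  · linarith [sub_inner_le_two_mul_inradius_inter hD.isBounded hu (c := c) hx₀ hx₀c.le h.le,
      setWidth_le_sub_add_setWidth_inter hMc.isBounded hMconv hu hx₀ hx₁ hmin hmax h.le hx₁c]

theorem roundedWidth_le_add_of_not_nonempty [NeZero d] {D : Set E} {ρ : ℝ} {u : E}
    (hρ : 0 ≤ ρ) (hD : IsCompact D) (hu : ‖u‖ = 1)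
    (c : ℝ) (hA : ¬(innerBody (D ∩ {x | ⟪u, x⟫ ≤ c}) ρ).Nonempty)
    (hB : ¬(innerBody (D ∩ {x | c ≤ ⟪u, x⟫}) ρ).Nonempty) :
    roundedWidth D ρ ≤
      roundedWidth (D ∩ {x | ⟪u, x⟫ ≤ c}) ρ + roundedWidth (D ∩ {x | c ≤ ⟪u, x⟫}) ρ := by
  rw [roundedWidth_of_not_nonempty hA, roundedWidth_of_not_nonempty hB]
  by_cases hM : (innerBody D ρ).Nonempty
  · have hMc : IsCompact (innerBody D ρ) := isCompact_innerBody hD hρ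
    obtain ⟨x₀, hx₀, x₁, hx₁, hmin, hmax⟩ := hMc.exists_isMinOn_isMaxOn_inner hM u
    rw [innerBody_inter_halfspace_le hu c hρ] at hA
    rw [innerBody_inter_halfspace_ge hu c hρ] at hB
    have hx₀c : c - ρ < ⟪u, x₀⟫ := lt_of_not_ge fun h => hA ⟨x₀, hx₀, h⟩
    have hx₁c : ⟪u, x₁⟫ < c + ρ := lt_of_not_ge fun h => hB ⟨x₁, hx₁, h⟩
    have h01 : ⟪u, x₀⟫ ≤ ⟪u, x₁⟫ := hmax hx₀
    rw [roundedWidth_of_nonempty hM]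
    linarith [sub_inner_le_two_mul_inradius_inter hD.isBounded hu (c := c) hx₀ hx₀c.le
        (by linarith),
      inner_sub_le_two_mul_inradius_inter hD.isBounded hu (c := c) hx₁ (by linarith) hx₁c.le,
      setWidth_le_inner_sub_inner hMc.isBounded hu hx₀ hmin hmax]
  · rw [roundedWidth_of_not_nonempty hM]
    linarith [inradius_le_inradius_inter_add hD.isBounded hu c]

theorem roundedWidth_le_add [NeZero d] {D : Set E} {ρ : ℝ} {u : E} (hρ : 0 ≤ ρ)
    (hD : IsCompact D) (hconv : Convex ℝ D) (hu : ‖u‖ = 1) (c : ℝ) :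
    roundedWidth D ρ ≤
      roundedWidth (D ∩ {x | ⟪u, x⟫ ≤ c}) ρ + roundedWidth (D ∩ {x | c ≤ ⟪u, x⟫}) ρ := by
  by_cases hB : (innerBody (D ∩ {x | c ≤ ⟪u, x⟫}) ρ).Nonempty
  · exact roundedWidth_le_add_of_nonempty hρ hD hconv hu c hB
  by_cases hA : (innerBody (D ∩ {x | ⟪u, x⟫ ≤ c}) ρ).Nonempty
  · have := roundedWidth_le_add_of_nonempty hρ hD hconv (u := -u) (by rwa [norm_neg]) (-c)
      (by simpa only [inner_neg_left, neg_le_neg_iff] using hA)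
    simp only [inner_neg_left, neg_le_neg_iff] at this
    linarith
  · exact roundedWidth_le_add_of_not_nonempty hρ hD hu c hA hB

theorem roundedWidth_le_add_of_ne_zero [NeZero d] {D : Set E} {ρ : ℝ} (hρ : 0 ≤ ρ)
    (hD : IsCompact D) (hconv : Convex ℝ D) {v : E} (hv : v ≠ 0) (c : ℝ) :
    roundedWidth D ρ ≤
      roundedWidth (D ∩ {x | ⟪v, x⟫ ≤ c}) ρ + roundedWidth (D ∩ {x | c ≤ ⟪v, x⟫}) ρ := by
  have hv' : 0 < ‖v‖ := norm_pos_iff.2 hv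
  have := roundedWidth_le_add hρ hD hconv (u := ‖v‖⁻¹ • v) (by simp [norm_smul, hv'.ne'])
    (c / ‖v‖)
  simpa only [real_inner_smul_left, inv_mul_eq_div, div_le_div_iff_of_pos_right hv'] using this

theorem SuccessiveCuts.isCompact_convex {C : Set E} {L : List (Set E)}
    (h : SuccessiveCuts C L) (hC : IsCompact C) (hconv : Convex ℝ C) :
    ∀ D ∈ L, IsCompact D ∧ Convex ℝ D := by
  induction h with
  | trivial => simpa using ⟨hC, hconv⟩
  | cut L D v c _ hD _ _ _ ih =>
    intro D' hD'
    obtain ⟨hDc, hDconv⟩ := ih D hD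
    have hlin : IsLinearMap ℝ fun x : E => ⟪v, x⟫ := (innerₛₗ ℝ v).isLinear
    have hcont : Continuous fun x : E => ⟪v, x⟫ := continuous_const.inner continuous_id
    rcases List.mem_append.1 hD' with h | h
    · exact ih D' (List.mem_of_mem_erase h)
    · simp only [List.mem_cons, List.not_mem_nil, or_false] at h
      rcases h with rfl | rfl
      · exact ⟨hDc.inter_right (isClosed_le hcont continuous_const),
          hDconv.inter (convex_halfSpace_le hlin c)⟩
      · exact ⟨hDc.inter_right (isClosed_le continuous_const hcont),
          hDconv.inter (convex_halfSpace_ge hlin c)⟩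

theorem SuccessiveCuts.le_sum_map (f : Set E → ℝ)
    (hf : ∀ D, IsCompact D → Convex ℝ D → ∀ v : E, v ≠ 0 → ∀ c,
      f D ≤ f (D ∩ {x | ⟪v, x⟫ ≤ c}) + f (D ∩ {x | c ≤ ⟪v, x⟫}))
    {C : Set E} {L : List (Set E)} (h : SuccessiveCuts C L) (hC : IsCompact C)
    (hconv : Convex ℝ C) : f C ≤ (L.map f).sum := by
  induction h with
  | trivial => simp
  | cut L D v c hL hD hv _ _ ih =>
    obtain ⟨hDc, hDconv⟩ := hL.isCompact_convex hC hconv D hD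
    rw [← List.sum_map_erase f hD] at ih
    simp only [List.map_append, List.sum_append, List.map_cons, List.map_nil, List.sum_cons,
      List.sum_nil, add_zero]
    linarith [hf D hDc hDconv v hv c]

end

theorem bezdek_bezdek_general {d : ℕ} (C : Set (EuclideanSpace ℝ (Fin d)))
    (hcomp : IsCompact C) (hconv : Convex ℝ C)
    (n : ℕ) (hn : 1 ≤ n)
    (L : List (Set (EuclideanSpace ℝ (Fin d)))) (hL : SuccessiveCuts C L)
    (hlen : L.length = n)
    (ρ : ℝ) (hρ : 0 < ρ) (hwidth : setWidth (rounded C ρ) = 2 * n * ρ) :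
    ∃ D ∈ L, ρ ≤ inradius D := by
  have : NeZero d := neZero_of_setWidth_ne_zero (K := rounded C ρ) (by rw [hwidth]; positivity)
  by_contra! hsmall
  have hpieces := hL.isCompact_convex hcomp hconv
  have hC : 2 * n * ρ ≤ (L.map (roundedWidth · ρ)).sum :=
    hwidth ▸ (setWidth_rounded_le_roundedWidth hcomp.isBounded hρ.le).trans
      (hL.le_sum_map (roundedWidth · ρ)
        (fun _ hD hDconv _ hv c => roundedWidth_le_add_of_ne_zero hρ.le hD hDconv hv c)
        hcomp hconv)
  obtain ⟨D₀, hD₀⟩ := List.exists_mem_of_length_pos (hlen ▸ hn)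
  have hpiece : ∀ D ∈ L, roundedWidth D ρ < 2 * ρ := fun D hD =>
    roundedWidth_lt_of_inradius_lt (hpieces D hD).1.isBounded (hsmall D hD)
  have hlt := List.sum_lt_sum _ _ (fun D hD => (hpiece D hD).le) ⟨D₀, hD₀, hpiece D₀ hD₀⟩
  rw [List.map_const', List.sum_replicate, hlen, nsmul_eq_mul] at hlt
  linarith

/-- (Bezdek–Bezdek) If a convex body `C ⊆ ℝ^d` is divided into `n` pieces by `n − 1`
successive hyperplane cuts, and `ρ > 0` satisfies `width (C^ρ) = 2nρ`, then some piece has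
inradius at least `ρ`. -/
theorem bezdek_bezdek {d : ℕ} (C : Set (EuclideanSpace ℝ (Fin d)))
    (hcomp : IsCompact C) (hconv : Convex ℝ C) (hint : (interior C).Nonempty)
    (n : ℕ) (hn : 1 ≤ n)
    (L : List (Set (EuclideanSpace ℝ (Fin d)))) (hL : SuccessiveCuts C L)
    (hlen : L.length = n)
    (ρ : ℝ) (hρ : 0 < ρ) (hwidth : setWidth (rounded C ρ) = 2 * n * ρ) :
    ∃ D ∈ L, ρ ≤ inradius D :=
  bezdek_bezdek_general C hcomp hconv n hn L hL hlen ρ hρ hwidth
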